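/- arXiv:2605.07895 — 5 statements merged into one kernel-verified Lean document; each statement's English description precedes it below -/
import Mathlib

section
/- Let G be a finite group, H a maximal proper subgroup of G which is normal in G, and n a natural number. Then in the Burnside ring A(G), nm_H^G(n) = n + ((n^{[G:H]} − n)/[G:H]) · [G/H], where [G/H] denotes the class of the G-set G/H. -/
/-- The `G`-set `Hom_H(G, {1,…,n})` of `H`-equivariant maps `G → {1,…,n}`, where `G` is a
left `H`-set via left multiplication and `{1,…,n}` has trivial `H`-action. -/
def EquivMaps (G : Type*) [Group G] (H : Subgroup G) (n : ℕ) : Type _ :=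
  {f : G → Fin n // ∀ (h g : G), h ∈ H → f (h * g) = f g}

/-- `G` acts on `Hom_H(G, {1,…,n})` by precomposition with right translation. -/
instance (G : Type*) [Group G] (H : Subgroup G) (n : ℕ) : MulAction G (EquivMaps G H n) where
  smul g f := ⟨fun g' => f.1 (g' * g), fun h g' hh => by
    have := f.2 h (g' * g) hh
    simpa [mul_assoc] using this⟩
  one_smul f := Subtype.ext (funext fun g' => by show f.1 (g' * 1) = f.1 g'; rw [mul_one])
  mul_smul g₁ g₂ f := Subtype.ext (funext fun g' => by
    show f.1 (g' * (g₁ * g₂)) = f.1 (g' * g₁ * g₂); rw [mul_assoc])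

namespace NormAux
variable {G : Type*} [Group G] (H : Subgroup G) [hH : H.Normal] (n : ℕ)

def act (q : G ⧸ H) (F : G ⧸ H → Fin n) : G ⧸ H → Fin n := fun x => F (x * q)

lemma act_act (a b : G ⧸ H) (F : G ⧸ H → Fin n) :
    act H n a (act H n b F) = act H n (a * b) F := by
  funext x; simp [act, mul_assoc]

lemma act_one (F : G ⧸ H → Fin n) : act H n 1 F = F := by
  funext x; simp [act]

def IsConst (F : G ⧸ H → Fin n) : Prop := ∀ x, F x = F 1

lemma isConst_act_iff (q : G ⧸ H) (F : G ⧸ H → Fin n) :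
    IsConst H n (act H n q F) ↔ IsConst H n F := by
  constructor
  · intro h y
    have h1 : ∀ x, F (x * q) = F q := by
      intro x; have := h x; simpa [act] using this
    have key : ∀ z, F z = F q := by
      intro z
      have := h1 (z * q⁻¹); simpa [mul_assoc] using this
    rw [key y, key 1]
  · intro h x
    simp only [act, h (x * q), h (1 * q)]

lemma act_eq_self (hmax : IsCoatom H) {F : G ⧸ H → Fin n} (hF : ¬ IsConst H n F)
    {q : G ⧸ H} (hq : act H n q F = F) : q = 1 := by
  classical
  set St : Subgroup (G ⧸ H) :=
    { carrier := {q | act H n q F = F}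
      one_mem' := act_one H n F
      mul_mem' := by
        intro a b ha hb
        show act H n (a * b) F = F
        rw [← act_act, hb, ha]
      inv_mem' := by
        intro a ha
        show act H n a⁻¹ F = F
        conv_lhs => rw [← (show act H n a F = F from ha)]
        rw [act_act, inv_mul_cancel, act_one] } with hSt
  set K : Subgroup G := St.comap (QuotientGroup.mk' H) with hK
  have hHK : H ≤ K := by
    intro h hh
    show QuotientGroup.mk' H h ∈ St
    have : QuotientGroup.mk' H h = 1 := (QuotientGroup.eq_one_iff h).2 hh
    rw [this]; exact St.one_mem
  by_cases hKtop : K = ⊤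
  · exfalso
    apply hF
    intro x
    induction x using QuotientGroup.induction_on with
    | H a =>
      have ha : a ∈ K := hKtop ▸ Subgroup.mem_top a
      have : act H n (QuotientGroup.mk a) F = F := ha
      calc F (QuotientGroup.mk a) = act H n (QuotientGroup.mk a) F 1 := by simp [act]
        _ = F 1 := by rw [this]
  · have hKH : K = H := by
      by_contra hne
      exact hKtop (hmax.2 K (lt_of_le_of_ne hHK (Ne.symm hne)))
    obtain ⟨a, rfl⟩ := QuotientGroup.mk_surjective q
    have : a ∈ K := hq
    rw [hKH] at this
    exact (QuotientGroup.eq_one_iff a).2 this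

lemma act_cancel (hmax : IsCoatom H) {F : G ⧸ H → Fin n} (hF : ¬ IsConst H n F)
    {a b : G ⧸ H} (h : act H n a F = act H n b F) : a = b := by
  have h1 : act H n (a⁻¹ * b) F = F := by
    rw [← act_act, ← h, act_act, inv_mul_cancel, act_one]
  have := act_eq_self H n hmax hF h1
  exact inv_mul_eq_one.mp this

/-- Identify `EquivMaps G H n` with functions on the quotient. -/
def e1 : EquivMaps G H n ≃ (G ⧸ H → Fin n) where
  toFun f x := Quotient.liftOn' x f.1 (by
    intro a b hab
    rw [QuotientGroup.leftRel_apply] at hab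
    have hb : b = (a * (a⁻¹ * b) * a⁻¹) * a := by group
    rw [hb]
    exact (f.2 _ a (hH.conj_mem _ hab a)).symm)
  invFun F := ⟨fun g => F (QuotientGroup.mk g), by
    intro h g hh
    have hmk : (QuotientGroup.mk (h * g) : G ⧸ H) = QuotientGroup.mk g := by
      refine QuotientGroup.eq.mpr ?_
      have := hH.conj_mem h⁻¹ (H.inv_mem hh) g⁻¹
      simpa [mul_inv_rev, mul_assoc] using this
    exact congrArg F hmk⟩
  left_inv f := Subtype.ext (funext fun g => rfl)
  right_inv F := funext fun x => by
    induction x using QuotientGroup.induction_on with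
    | H a => rfl

lemma e1_smul (g : G) (f : EquivMaps G H n) :
    e1 H n (g • f) = act H n (QuotientGroup.mk g) (e1 H n f) := by
  funext x
  induction x using QuotientGroup.induction_on with
  | H a => rfl

def orbSetoid : Setoid {F : G ⧸ H → Fin n // ¬ IsConst H n F} where
  r f g := ∃ q, act H n q f.1 = g.1
  iseqv := ⟨fun f => ⟨1, act_one H n f.1⟩,
    fun {f g} h => by
      obtain ⟨q, hq⟩ := h
      exact ⟨q⁻¹, by rw [← hq, act_act, inv_mul_cancel, act_one]⟩,
    fun {f g k} h1 h2 => by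
      obtain ⟨q1, hq1⟩ := h1
      obtain ⟨q2, hq2⟩ := h2
      exact ⟨q2 * q1, by rw [← act_act, hq1, hq2]⟩⟩

lemma orb_sound {f g : {F : G ⧸ H → Fin n // ¬ IsConst H n F}} (q : G ⧸ H)
    (hq : act H n q f.1 = g.1) :
    Quotient.mk (orbSetoid H n) f = Quotient.mk (orbSetoid H n) g :=
  Quotient.sound (⟨q, hq⟩ : (orbSetoid H n).r f g)

lemma orb_exact {f g : {F : G ⧸ H → Fin n // ¬ IsConst H n F}}
    (h : Quotient.mk (orbSetoid H n) f = Quotient.mk (orbSetoid H n) g) :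
    ∃ q, act H n q f.1 = g.1 :=
  Quotient.exact h

noncomputable def qOf (f : {F : G ⧸ H → Fin n // ¬ IsConst H n F}) : G ⧸ H :=
  Classical.choose (orb_exact H n (Quotient.out_eq (Quotient.mk (orbSetoid H n) f)))

lemma qOf_spec (f : {F : G ⧸ H → Fin n // ¬ IsConst H n F}) :
    act H n (qOf H n f) ((Quotient.mk (orbSetoid H n) f).out).1 = f.1 :=
  Classical.choose_spec (orb_exact H n (Quotient.out_eq (Quotient.mk (orbSetoid H n) f)))

noncomputable def e3 (hmax : IsCoatom H) :
    {F : G ⧸ H → Fin n // ¬ IsConst H n F} ≃ Quotient (orbSetoid H n) × (G ⧸ H) where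
  toFun f := (Quotient.mk _ f, qOf H n f)
  invFun p := ⟨act H n p.2 (p.1.out).1,
    fun hc => (p.1.out).2 ((isConst_act_iff H n p.2 _).1 hc)⟩
  left_inv f := Subtype.ext (qOf_spec H n f)
  right_inv p := by
    obtain ⟨ω, q⟩ := p
    have h1 : Quotient.mk (orbSetoid H n)
        (⟨act H n q (ω.out).1, fun hc => (ω.out).2 ((isConst_act_iff H n q _).1 hc)⟩ :
          {F : G ⧸ H → Fin n // ¬ IsConst H n F}) = ω := by
      refine Eq.trans ?_ (Quotient.out_eq ω)
      exact (orb_sound H n q rfl).symm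
    refine Prod.ext h1 ?_
    have h2 := qOf_spec H n (⟨act H n q (ω.out).1,
      fun hc => (ω.out).2 ((isConst_act_iff H n q _).1 hc)⟩ :
        {F : G ⧸ H → Fin n // ¬ IsConst H n F})
    rw [h1] at h2
    exact act_cancel H n hmax (ω.out).2 h2

lemma e3_smul (hmax : IsCoatom H) (q0 : G ⧸ H)
    (f : {F : G ⧸ H → Fin n // ¬ IsConst H n F})
    (h : ¬ IsConst H n (act H n q0 f.1)) :
    e3 H n hmax ⟨act H n q0 f.1, h⟩ = ((e3 H n hmax f).1, q0 * (e3 H n hmax f).2) := by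
  have h1 : Quotient.mk (orbSetoid H n)
      (⟨act H n q0 f.1, h⟩ : {F : G ⧸ H → Fin n // ¬ IsConst H n F})
      = Quotient.mk (orbSetoid H n) f :=
    (orb_sound H n q0 rfl).symm
  refine Prod.ext h1 ?_
  show qOf H n ⟨act H n q0 f.1, h⟩ = q0 * qOf H n f
  have h2 := qOf_spec H n (⟨act H n q0 f.1, h⟩ :
    {F : G ⧸ H → Fin n // ¬ IsConst H n F})
  rw [h1] at h2
  have h3 : act H n (q0 * qOf H n f) ((Quotient.mk (orbSetoid H n) f).out).1
      = act H n q0 f.1 := by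
    rw [← act_act, qOf_spec]
  exact act_cancel H n hmax ((Quotient.mk (orbSetoid H n) f).out).2 (h2.trans h3.symm)

open Classical in
noncomputable def e2 : (G ⧸ H → Fin n) ≃ (Fin n ⊕ {F : G ⧸ H → Fin n // ¬ IsConst H n F}) where
  toFun F := if h : IsConst H n F then Sum.inl (F 1) else Sum.inr ⟨F, h⟩
  invFun s := Sum.elim (fun c => fun _ => c) (fun f => f.1) s
  left_inv F := by
    by_cases h : IsConst H n F
    · simp only [dif_pos h, Sum.elim_inl]
      exact funext fun x => (h x).symm
    · simp only [dif_neg h, Sum.elim_inr]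
  right_inv s := by
    rcases s with c | f
    · have h : IsConst H n (fun _ => c) := fun x => rfl
      simp only [Sum.elim_inl, dif_pos h]
      exact dif_pos h
    · simp only [Sum.elim_inr, dif_neg f.2]
      exact dif_neg f.2

lemma e2_of_const {F : G ⧸ H → Fin n} (h : IsConst H n F) :
    e2 H n F = Sum.inl (F 1) := dif_pos h

lemma e2_of_nonconst {F : G ⧸ H → Fin n} (h : ¬ IsConst H n F) :
    e2 H n F = Sum.inr ⟨F, h⟩ := dif_neg h

noncomputable def eConst : {F : G ⧸ H → Fin n // IsConst H n F} ≃ Fin n where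
  toFun F := F.1 1
  invFun c := ⟨fun _ => c, fun x => rfl⟩
  left_inv F := Subtype.ext (funext fun x => (F.2 x).symm)
  right_inv c := rfl

lemma smul_eq_mk_mul (g : G) (q : G ⧸ H) :
    g • q = QuotientGroup.mk g * q := by
  induction q using QuotientGroup.induction_on with
  | H a => rfl

end NormAux

open NormAux

/-- Let `H` be a maximal proper subgroup of a finite group `G` which is normal in `G`, and
`n : ℕ`.  Then in the Burnside ring `A(G)` one has
`nm_H^G(n) = n + ((n^[G:H] − n)/[G:H])·[G/H]`: equivalently, the `G`-set
`Hom_H(G, {1,…,n})` is `G`-equivariantly isomorphic to the disjoint union of `n` fixed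
points and `(n^[G:H] − n)/[G:H]` copies of the orbit `G/H`. -/
theorem norm_of_nat_maximal_normal {G : Type*} [Group G] [Fintype G]
    (H : Subgroup G) (hH : H.Normal) (hmax : IsCoatom H) (n : ℕ) :
    ∃ e : EquivMaps G H n ≃ (Fin n ⊕ (Fin ((n ^ H.index - n) / H.index) × (G ⧸ H))),
      ∀ (g : G) (f : EquivMaps G H n),
        e (g • f) = Sum.map id (Prod.map id (fun c => g • c)) (e f) := by
  classical
  haveI := hH
  haveI : Fintype (G ⧸ H) := Fintype.ofFinite _
  haveI : Fintype (Quotient (orbSetoid H n)) := Fintype.ofFinite _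
  have hQcard : Fintype.card (G ⧸ H) = H.index := by
    rw [Subgroup.index_eq_card, Nat.card_eq_fintype_card]
  have hQpos : 0 < H.index := by
    rw [← hQcard]; exact Fintype.card_pos
  have hS : Fintype.card {F : G ⧸ H → Fin n // ¬ IsConst H n F} = n ^ H.index - n := by
    rw [Fintype.card_subtype_compl, Fintype.card_congr (eConst H n), Fintype.card_fin,
      Fintype.card_fun, Fintype.card_fin, hQcard]
  have hΩ : Fintype.card (Quotient (orbSetoid H n)) = (n ^ H.index - n) / H.index := by
    have h := Fintype.card_congr (e3 H n hmax)
    rw [Fintype.card_prod, hQcard, hS] at h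
    rw [h, Nat.mul_div_cancel _ hQpos]
  let eΩ : Quotient (orbSetoid H n) ≃ Fin ((n ^ H.index - n) / H.index) :=
    Fintype.equivFinOfCardEq hΩ
  refine ⟨(e1 H n).trans ((e2 H n).trans (Equiv.sumCongr (Equiv.refl (Fin n))
    ((e3 H n hmax).trans (Equiv.prodCongr eΩ (Equiv.refl (G ⧸ H)))))), ?_⟩
  intro g f
  simp only [Equiv.trans_apply, e1_smul H n g f]
  set F := e1 H n f with hF
  set q0 : G ⧸ H := QuotientGroup.mk g with hq0
  by_cases hC : IsConst H n F
  · have hC' : IsConst H n (act H n q0 F) := (isConst_act_iff H n q0 F).2 hC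
    rw [e2_of_const H n hC, e2_of_const H n hC']
    have : act H n q0 F 1 = F 1 := by
      show F (1 * q0) = F 1
      rw [hC (1 * q0)]
    rw [this]
    rfl
  · have hC' : ¬ IsConst H n (act H n q0 F) := fun h => hC ((isConst_act_iff H n q0 F).1 h)
    rw [e2_of_nonconst H n hC, e2_of_nonconst H n hC']
    have h3 := e3_smul H n hmax q0 ⟨F, hC⟩ hC'
    simp only [Equiv.sumCongr_apply, Sum.map_inr, Equiv.trans_apply, h3,
      Equiv.prodCongr_apply, Equiv.coe_refl, Prod.map, id_eq, smul_eq_mk_mul, hq0]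
    rw [show e3 H n hmax ⟨act H n (g : G ⧸ H) F, hC'⟩
      = ((e3 H n hmax ⟨F, hC⟩).1, (g : G ⧸ H) * (e3 H n hmax ⟨F, hC⟩).2) from h3]
end

section
/- Let p be a prime. In the ring Z[t]/(t² − pt), the ideal (q, t) is prime for every prime number q, the ideal (q, t − p) is prime for every prime number q, and (p, t) = (p, t − p). -/
open Polynomial

lemma ker_eval_mod (q : ℕ) (a : ℤ) :
    RingHom.ker ((Int.castRingHom (ZMod q)).comp (evalRingHom a)) =
      Ideal.span {C (q : ℤ), X - C a} := by
  apply le_antisymm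
  · intro f hf
    simp only [RingHom.mem_ker, RingHom.comp_apply, coe_evalRingHom,
      Int.coe_castRingHom] at hf
    have hdvd : (q : ℤ) ∣ f.eval a := by
      rwa [ZMod.intCast_zmod_eq_zero_iff_dvd] at hf
    obtain ⟨c, hc⟩ := hdvd
    obtain ⟨g, hg⟩ := (X_sub_C_dvd_sub_C_eval : X - C a ∣ f - C (f.eval a))
    have hf' : f = C (q : ℤ) * C c + (X - C a) * g := by
      rw [← hg, ← C_mul, ← hc]; ring
    rw [hf']
    exact add_mem (Ideal.mul_mem_right _ _ (Ideal.subset_span (by simp)))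
      (Ideal.mul_mem_right _ _ (Ideal.subset_span (by simp)))
  · rw [Ideal.span_le]
    rintro f (rfl | rfl)
    · simp [RingHom.mem_ker]
    · simp [RingHom.mem_ker]

lemma prime_aux (q : ℕ) (hq : q.Prime) (a : ℤ) :
    (Ideal.span {C (q : ℤ), X - C a}).IsPrime := by
  have : Fact q.Prime := ⟨hq⟩
  rw [← ker_eval_mod]
  exact RingHom.ker_isPrime _

/-- The ring `ℤ[t]/(t² − pt)`, the Burnside ring of the cyclic group `C_p`. -/
abbrev BurnsideCp (p : ℕ) : Type :=
  ℤ[X] ⧸ Ideal.span {(X : ℤ[X]) ^ 2 - C (p : ℤ) * X}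

/-- The class `t` of the free orbit in `ℤ[t]/(t² − pt)`. -/
noncomputable def tE (p : ℕ) : BurnsideCp p :=
  Ideal.Quotient.mk _ (X : ℤ[X])

lemma mk_natCast (p q : ℕ) :
    ((q : BurnsideCp p)) = Ideal.Quotient.mk _ (C (q : ℤ)) := by
  push_cast
  rfl

lemma key_prime (p q : ℕ) (hq : q.Prime) (a : ℤ)
    (ha : (X : ℤ[X]) ^ 2 - C (p : ℤ) * X ∈ Ideal.span {C (q : ℤ), X - C a}) :
    (Ideal.span {((q : BurnsideCp p)),
      Ideal.Quotient.mk _ (X - C a)}).IsPrime := by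
  have hmap : Ideal.span {((q : BurnsideCp p)), Ideal.Quotient.mk _ (X - C a)} =
      Ideal.map (Ideal.Quotient.mk _) (Ideal.span {C (q : ℤ), X - C a}) := by
    rw [Ideal.map_span, Set.image_insert_eq, Set.image_singleton, mk_natCast]
  rw [hmap]
  have : (Ideal.span {C (q : ℤ), X - C a}).IsPrime := prime_aux q hq a
  exact Ideal.map_isPrime_of_surjective Ideal.Quotient.mk_surjective
    (by rw [Ideal.mk_ker, Ideal.span_le]; simpa using ha)

/-- In `ℤ[t]/(t² − pt)` for `p` prime: the ideal `(q, t)` is prime for every prime `q`,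
the ideal `(q, t − p)` is prime for every prime `q`, and `(p, t) = (p, t − p)`. -/
theorem burnsideCp_prime_ideals (p : ℕ) (hp : p.Prime) :
    (∀ q : ℕ, q.Prime →
      (Ideal.span {((q : BurnsideCp p)), tE p}).IsPrime ∧
      (Ideal.span {((q : BurnsideCp p)), tE p - (p : BurnsideCp p)}).IsPrime) ∧
    Ideal.span {((p : BurnsideCp p)), tE p} =
      Ideal.span {((p : BurnsideCp p)), tE p - (p : BurnsideCp p)} := by
  have ht : tE p = Ideal.Quotient.mk _ (X - C (0 : ℤ)) := by simp [tE]
  have ht' : tE p - (p : BurnsideCp p) = Ideal.Quotient.mk _ (X - C ((p : ℤ))) := by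
    rw [map_sub, mk_natCast]; rfl
  refine ⟨fun q hq => ?_, ?_⟩
  · constructor
    · rw [ht]
      refine key_prime p q hq 0 ?_
      have : (X : ℤ[X]) ^ 2 - C (p : ℤ) * X = X * X - C (p:ℤ) * X := by ring
      rw [this]
      exact sub_mem (Ideal.mul_mem_left _ _ (Ideal.subset_span (by simp)))
        (Ideal.mul_mem_left _ _ (Ideal.subset_span (by simp)))
    · rw [ht']
      refine key_prime p q hq p ?_
      have : (X : ℤ[X]) ^ 2 - C (p : ℤ) * X = X * (X - C (p:ℤ)) := by ring
      rw [this]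
      exact Ideal.mul_mem_left _ _ (Ideal.subset_span (by simp))
  · have hpmem : (p : BurnsideCp p) ∈ Ideal.span {((p : BurnsideCp p)), tE p} :=
      Ideal.subset_span (by simp)
    have hpmem' : (p : BurnsideCp p) ∈
        Ideal.span {((p : BurnsideCp p)), tE p - (p : BurnsideCp p)} :=
      Ideal.subset_span (by simp)
    apply le_antisymm <;> rw [Ideal.span_le] <;> rintro x (rfl | rfl)
    · exact hpmem'
    · have := Ideal.subset_span (s := {((p : BurnsideCp p)), tE p - (p : BurnsideCp p)})
        (show tE p - (p:BurnsideCp p) ∈ _ by simp)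
      simpa using add_mem this hpmem'
    · exact hpmem
    · exact sub_mem (Ideal.subset_span (by simp)) hpmem
end

section
/- Let p be a prime. In the ring Z[t]/(t² − pt), the ideals (t) and (t − p) are prime (corresponding to q = 0), and every prime ideal of Z[t]/(t² − pt) is of the form (q, t), (q, t − p), (t), or (t − p), where q ranges over prime numbers. -/
open Polynomial

/-- A prime ideal of `ℤ[X]` containing `X - C r` is `(X - C r)` or `(q, X - C r)`. -/
theorem aux_classify (r : ℤ) (J : Ideal ℤ[X]) (hJ : J.IsPrime) (hr : X - C r ∈ J) :
    J = Ideal.span {X - C r} ∨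
    ∃ q : ℕ, q.Prime ∧ J = Ideal.span {C (q : ℤ), X - C r} := by
  set f : ℤ[X] →+* ℤ := evalRingHom r with hf
  have hfCz : ∀ z : ℤ, f (C z) = z := fun z => eval_C
  have hsurj : Function.Surjective f := fun z => ⟨C z, eval_C⟩
  have hker : RingHom.ker f = Ideal.span {X - C r} := ker_evalRingHom r
  have hkerJ : RingHom.ker f ≤ J := by
    rw [hker]; exact Ideal.span_le.mpr (by simpa using hr)
  have hJK : Ideal.comap f (Ideal.map f J) = J := by
    rw [Ideal.comap_map_of_surjective f hsurj]
    exact sup_eq_left.mpr hkerJ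
  have hKprime : (Ideal.map f J).IsPrime := Ideal.map_isPrime_of_surjective hsurj hkerJ
  obtain ⟨n, hn⟩ : ∃ n : ℤ, Ideal.map f J = Ideal.span {n} :=
    ⟨Submodule.IsPrincipal.generator (Ideal.map f J),
      (Ideal.span_singleton_generator (Ideal.map f J)).symm⟩
  by_cases hn0 : n = 0
  · left
    rw [← hJK, hn, hn0]
    have h0 : Ideal.span ({(0:ℤ)} : Set ℤ) = ⊥ := by simp
    rw [h0, ← RingHom.ker_eq_comap_bot, hker]
  · right
    have hprime : Prime n := (Ideal.span_singleton_prime hn0).mp (hn ▸ hKprime)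
    refine ⟨n.natAbs, Int.prime_iff_natAbs_prime.mp hprime, ?_⟩
    have hspan : Ideal.span ({n} : Set ℤ) = Ideal.span {(n.natAbs : ℤ)} :=
      Ideal.span_singleton_eq_span_singleton.mpr (Int.associated_natAbs n)
    rw [← hJK, hn, hspan]
    apply le_antisymm
    · intro a ha
      rw [Ideal.mem_comap, Ideal.mem_span_singleton] at ha
      obtain ⟨z, hz⟩ := ha
      have h1 : C (f a) ∈ Ideal.span {C ((n.natAbs : ℕ) : ℤ), X - C r} := by
        rw [hz, map_mul]
        exact Ideal.mul_mem_right _ _ (Ideal.subset_span (Set.mem_insert _ _))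
      have h2 : a - C (f a) ∈ Ideal.span {C ((n.natAbs : ℕ) : ℤ), X - C r} := by
        have hk : a - C (f a) ∈ RingHom.ker f := by
          simp [RingHom.mem_ker, hfCz]
        rw [hker] at hk
        exact Ideal.span_mono (by simp) hk
      have ha' : a = C (f a) + (a - C (f a)) := by ring
      rw [ha']
      exact Ideal.add_mem _ h1 h2
    · rw [Ideal.span_le]
      rintro x hx
      rcases hx with h | h
      · subst h
        rw [SetLike.mem_coe, Ideal.mem_comap, hfCz, Ideal.mem_span_singleton]
      · simp only [Set.mem_singleton_iff] at h
        subst h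
        rw [SetLike.mem_coe, Ideal.mem_comap, Ideal.mem_span_singleton]
        have hfX : f X = r := eval_X
        have hz : f (X - C r) = 0 := by rw [map_sub, hfCz, hfX, sub_self]
        rw [hz]
        exact dvd_zero _

/-- In `ℤ[t]/(t² − pt)` for `p` prime: the ideals `(t)` and `(t − p)` are prime, and every
prime ideal is of the form `(t)`, `(t − p)`, `(q, t)`, or `(q, t − p)` with `q` a prime
number. -/
theorem burnsideCp_prime_ideal_classification (p : ℕ) (hp : p.Prime) :
    (Ideal.span {tE p}).IsPrime ∧
    (Ideal.span {tE p - (p : BurnsideCp p)}).IsPrime ∧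
    (∀ I : Ideal (BurnsideCp p), I.IsPrime →
      I = Ideal.span {tE p} ∨
      I = Ideal.span {tE p - (p : BurnsideCp p)} ∨
      ∃ q : ℕ, q.Prime ∧
        (I = Ideal.span {((q : BurnsideCp p)), tE p} ∨
         I = Ideal.span {((q : BurnsideCp p)), tE p - (p : BurnsideCp p)})) := by
  set I0 : Ideal ℤ[X] := Ideal.span {(X : ℤ[X]) ^ 2 - C (p : ℤ) * X} with hI0
  set mk : ℤ[X] →+* BurnsideCp p := Ideal.Quotient.mk I0 with hmk
  -- cast lemmas
  have hmkC : ∀ n : ℕ, mk (C (n : ℤ)) = (n : BurnsideCp p) := by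
    intro n
    exact (congrArg mk (C_eq_natCast (R := ℤ) n)).trans (map_natCast mk n)
  have hmkX : mk X = tE p := rfl
  have hmkXp : mk (X - C (p : ℤ)) = tE p - (p : BurnsideCp p) := by
    rw [map_sub, hmkX, hmkC]
  have hmkX0 : mk (X - C (0 : ℤ)) = tE p := by
    rw [map_sub, hmkX, C_0, map_zero, sub_zero]
  -- primality of the kernel ideal of evaluation on the quotient
  have key : ∀ r : ℤ, r ^ 2 - (p : ℤ) * r = 0 → (Ideal.span {mk (X - C r)}).IsPrime := by
    intro r hr
    have hI0ker : I0 ≤ RingHom.ker (evalRingHom r) := by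
      rw [hI0, Ideal.span_le]
      rintro x hx
      simp only [Set.mem_singleton_iff] at hx
      subst hx
      simp only [SetLike.mem_coe, RingHom.mem_ker, coe_evalRingHom, eval_sub, eval_mul,
        eval_pow, eval_X, eval_C]
      exact hr
    have hkerg := Ideal.ker_quotient_lift (evalRingHom r) hI0ker
    rw [ker_evalRingHom, Ideal.map_span, Set.image_singleton] at hkerg
    rw [← hkerg]
    exact RingHom.ker_isPrime _
  have h0 : (0 : ℤ) ^ 2 - (p : ℤ) * 0 = 0 := by ring
  have hpp : ((p : ℤ)) ^ 2 - (p : ℤ) * (p : ℤ) = 0 := by ring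
  refine ⟨hmkX0 ▸ key 0 h0, hmkXp ▸ key (p : ℤ) hpp, ?_⟩
  intro I hI
  set J : Ideal ℤ[X] := Ideal.comap mk I with hJdef
  have hJprime : J.IsPrime := hI.comap mk
  have hImap : Ideal.map mk J = I := Ideal.map_comap_of_surjective mk Ideal.Quotient.mk_surjective I
  have hmem : (X : ℤ[X]) * (X - C (p : ℤ)) ∈ J := by
    rw [hJdef, Ideal.mem_comap]
    have : mk ((X : ℤ[X]) * (X - C (p : ℤ))) = 0 := by
      rw [hmk, Ideal.Quotient.eq_zero_iff_mem, hI0,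
        show (X : ℤ[X]) * (X - C (p : ℤ)) = X ^ 2 - C (p : ℤ) * X by ring]
      exact Ideal.subset_span rfl
    rw [this]
    exact I.zero_mem
  -- helper to push span descriptions through mk
  have hmapspan2 : ∀ a b : ℤ[X], Ideal.map mk (Ideal.span {a, b}) = Ideal.span {mk a, mk b} := by
    intro a b
    rw [Ideal.map_span, Set.image_insert_eq, Set.image_singleton]
  rcases hJprime.mem_or_mem hmem with hX | hXp
  · -- X ∈ J
    have hX' : X - C (0 : ℤ) ∈ J := by simpa using hX
    rcases aux_classify 0 J hJprime hX' with h | ⟨q, hq, h⟩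
    · left
      rw [← hImap, h, Ideal.map_span, Set.image_singleton, hmkX0]
    · right; right
      exact ⟨q, hq, Or.inl (by rw [← hImap, h, hmapspan2, hmkC, hmkX0])⟩
  · -- X - C p ∈ J
    rcases aux_classify (p : ℤ) J hJprime hXp with h | ⟨q, hq, h⟩
    · right; left
      rw [← hImap, h, Ideal.map_span, Set.image_singleton, hmkXp]
    · right; right
      exact ⟨q, hq, Or.inr (by rw [← hImap, h, hmapspan2, hmkC, hmkXp])⟩
end

section
/- Let T be a Green functor over a finite group G (all transfers, no nontrivial norms), and let P be an ideal of T. Then P is prime in the bi-incomplete (Tambara) sense if and only if P is a Lewis prime, i.e., P is proper and whenever a ∈ T(A), b ∈ T(B) for finite G-sets A, B satisfy a ⋆ b ∈ P(A × B) (where a ⋆ b = res_{π₁}(a) · res_{π₂}(b)), then a ∈ P(A) or b ∈ P(B). -/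
universe u

/-- The underlying levels of a Green functor for a finite group `G`: a commutative ring
`obj X` for every finite `G`-set `X`. -/
structure GreenFunctorCore (G : Type u) [Group G] [Fintype G] where
  obj : (X : Type u) → [Fintype X] → [MulAction G X] → Type u
  commRing : (X : Type u) → [Fintype X] → [MulAction G X] → CommRing (obj X)

attribute [instance] GreenFunctorCore.commRing

/-- A Green functor for a finite group `G` (an `(O_triv, O_comp)`-Tambara functor):
levelwise commutative rings with contravariantly functorial ring-homomorphism
restrictions along equivariant maps (these subsume conjugations), additive transfers,
and Frobenius reciprocity. -/
structure GreenFunctor (G : Type u) [Group G] [Fintype G] extends GreenFunctorCore G where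
  res : {X Y : Type u} → [Fintype X] → [MulAction G X] → [Fintype Y] → [MulAction G Y] →
    (X →[G] Y) → (obj Y →+* obj X)
  tr : {X Y : Type u} → [Fintype X] → [MulAction G X] → [Fintype Y] → [MulAction G Y] →
    (X →[G] Y) → (obj X →+ obj Y)
  res_id : ∀ {X : Type u} [Fintype X] [MulAction G X],
    res (MulActionHom.id G (X := X)) = RingHom.id (obj X)
  res_comp : ∀ {X Y Z : Type u} [Fintype X] [MulAction G X] [Fintype Y] [MulAction G Y]
    [Fintype Z] [MulAction G Z] (f : X →[G] Y) (g : Y →[G] Z),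
    res (g.comp f) = (res f).comp (res g)
  frobenius : ∀ {X Y : Type u} [Fintype X] [MulAction G X] [Fintype Y] [MulAction G Y]
    (f : X →[G] Y) (x : obj X) (y : obj Y),
    tr f (x * res f y) = tr f x * y

/-- An ideal of a Green functor: a levelwise collection of ideals closed under
restrictions and transfers. -/
structure GreenIdeal {G : Type u} [Group G] [Fintype G] (T : GreenFunctor G) where
  idl : (X : Type u) → [Fintype X] → [MulAction G X] → Ideal (T.obj X)
  res_mem : ∀ {X Y : Type u} [Fintype X] [MulAction G X] [Fintype Y] [MulAction G Y]
    (f : X →[G] Y) (y : T.obj Y), y ∈ idl Y → T.res f y ∈ idl X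
  tr_mem : ∀ {X Y : Type u} [Fintype X] [MulAction G X] [Fintype Y] [MulAction G Y]
    (f : X →[G] Y) (x : T.obj X), x ∈ idl X → T.tr f x ∈ idl Y

/-- Properness of a Green functor ideal: `P ≠ T`. -/
def GreenIdeal.Proper {G : Type u} [Group G] [Fintype G] {T : GreenFunctor G}
    (P : GreenIdeal T) : Prop :=
  ¬ ∀ (X : Type u) [Fintype X] [MulAction G X], P.idl X = ⊤

/-- The first projection as an equivariant map. -/
def fstHom (G A B : Type u) [Group G] [MulAction G A] [MulAction G B] :
    (A × B) →[G] A :=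
  ⟨Prod.fst, fun _ _ => rfl⟩

/-- The second projection as an equivariant map. -/
def sndHom (G A B : Type u) [Group G] [MulAction G A] [MulAction G B] :
    (A × B) →[G] B :=
  ⟨Prod.snd, fun _ _ => rfl⟩

/-- `P` is prime in the bi-incomplete (Tambara) sense: `P` is proper, and whenever all
generalized products of `a` and `b` (products of restrictions along arbitrary spans,
there being no nontrivial norms) lie in `P`, then `a ∈ P` or `b ∈ P`. -/
def GreenIdeal.IsPrimeBI {G : Type u} [Group G] [Fintype G] {T : GreenFunctor G}
    (P : GreenIdeal T) : Prop :=
  P.Proper ∧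
  ∀ (A B : Type u) [Fintype A] [MulAction G A] [Fintype B] [MulAction G B]
    (a : T.obj A) (b : T.obj B),
    (∀ (C : Type u) [Fintype C] [MulAction G C] (f : C →[G] A) (g : C →[G] B),
      T.res f a * T.res g b ∈ P.idl C) →
    a ∈ P.idl A ∨ b ∈ P.idl B

/-- `P` is a Lewis prime: `P` is proper, and whenever
`a ⋆ b = res_{π₁}(a)·res_{π₂}(b) ∈ P(A × B)`, then `a ∈ P(A)` or `b ∈ P(B)`. -/
def GreenIdeal.IsLewisPrime {G : Type u} [Group G] [Fintype G] {T : GreenFunctor G}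
    (P : GreenIdeal T) : Prop :=
  P.Proper ∧
  ∀ (A B : Type u) [Fintype A] [MulAction G A] [Fintype B] [MulAction G B]
    (a : T.obj A) (b : T.obj B),
    T.res (fstHom G A B) a * T.res (sndHom G A B) b ∈ P.idl (A × B) →
    a ∈ P.idl A ∨ b ∈ P.idl B

/-- For an ideal `P` of a Green functor `T`, `P` is prime in the bi-incomplete Tambara
sense if and only if `P` is a Lewis prime. -/
theorem greenIdeal_isPrimeBI_iff_isLewisPrime {G : Type u} [Group G] [Fintype G]
    (T : GreenFunctor G) (P : GreenIdeal T) :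
    P.IsPrimeBI ↔ P.IsLewisPrime := by
  constructor
  · rintro ⟨hp, hP⟩
    refine ⟨hp, fun A B _ _ _ _ a b hab => ?_⟩
    refine hP A B a b fun C _ _ f g => ?_
    let h : C →[G] (A × B) := ⟨fun c => (f c, g c), fun m c => by
      simp [map_smul, Prod.smul_mk]⟩
    have hf : (fstHom G A B).comp h = f := rfl
    have hg : (sndHom G A B).comp h = g := rfl
    have h1 : T.res f a = T.res h (T.res (fstHom G A B) a) := by
      rw [← hf, T.res_comp]; rfl
    have h2 : T.res g b = T.res h (T.res (sndHom G A B) b) := by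
      rw [← hg, T.res_comp]; rfl
    rw [h1, h2, ← map_mul]
    exact P.res_mem h _ hab
  · rintro ⟨hp, hP⟩
    refine ⟨hp, fun A B _ _ _ _ a b hab => ?_⟩
    exact hP A B a b (hab (A × B) (fstHom G A B) (sndHom G A B))
end

section
/- Let p be a prime, and let T be the C_p-Tambara functor with T(C_p/C_p) = Z[t]/(t² − pt), T(C_p/e) = Z, res(t) = p, tr(k) = tk, nm(k) = k + ((k^p − k)/p)t. For each prime number q (and q = 0), the pair of ideals (I_top, I_bot) = ((q, t − p), (q)) is closed under res, tr, and nm, i.e., res(I_top) ⊆ I_bot, tr(I_bot) ⊆ I_top, nm(I_bot) ⊆ I_top. -/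
open Polynomial

/-- The restriction map `res : ℤ[t]/(t² − pt) → ℤ` of the Burnside Tambara functor of
`C_p`, sending `t ↦ p`. -/
noncomputable def resB (p : ℕ) : BurnsideCp p →+* ℤ :=
  Ideal.Quotient.lift _ (evalRingHom (p : ℤ)) (by
    intro f hf
    obtain ⟨a, rfl⟩ := Ideal.mem_span_singleton'.mp hf
    simp [pow_two])

/-- The Burnside norm `nm : ℤ → ℤ[t]/(t² − pt)`, `nm(k) = k + ((k^p − k)/p)·t`. -/
noncomputable def NB (p : ℕ) (k : ℤ) : BurnsideCp p :=
  (k : BurnsideCp p) + (((k ^ p - k) / p : ℤ) : BurnsideCp p) * tE p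

lemma resB_tE (p : ℕ) : resB p (tE p) = (p : ℤ) := by
  simp [resB, tE]

lemma fermat_div (p : ℕ) (hp : p.Prime) (k : ℤ) :
    ((k ^ p - k) / p : ℤ) * p = k ^ p - k := by
  apply Int.ediv_mul_cancel
  haveI := Fact.mk hp
  have : ((k ^ p - k : ℤ) : ZMod p) = 0 := by
    push_cast
    rw [ZMod.pow_card]
    ring
  exact_mod_cast (ZMod.intCast_zmod_eq_zero_iff_dvd _ _).mp this

/-- For the Burnside Tambara functor of `C_p` (with `res(t) = p`, `tr(k) = t·k`,
`nm(k) = k + ((k^p − k)/p)·t`), for every prime `q` (and `q = 0`) the pair of ideals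
`(I_top, I_bot) = ((q, t − p), (q))` is closed under `res`, `tr`, and `nm`. -/
theorem burnsideCp_pair_closed (p q : ℕ) (hp : p.Prime) (hq : q.Prime ∨ q = 0) :
    (∀ x ∈ Ideal.span {((q : BurnsideCp p)), tE p - (p : BurnsideCp p)},
      resB p x ∈ Ideal.span {(q : ℤ)}) ∧
    (∀ k : ℤ, k ∈ Ideal.span {(q : ℤ)} →
      tE p * (k : BurnsideCp p) ∈
        Ideal.span {((q : BurnsideCp p)), tE p - (p : BurnsideCp p)}) ∧
    (∀ k : ℤ, k ∈ Ideal.span {(q : ℤ)} →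
      NB p k ∈ Ideal.span {((q : BurnsideCp p)), tE p - (p : BurnsideCp p)}) := by
  refine ⟨?_, ?_, ?_⟩
  · intro x hx
    obtain ⟨a, b, rfl⟩ := Ideal.mem_span_pair.mp hx
    rw [Ideal.mem_span_singleton]
    have : resB p (a * q + b * (tE p - p)) = resB p a * q := by
      simp [resB_tE]
    rw [this]
    exact ⟨resB p a, mul_comm _ _⟩
  · intro k hk
    obtain ⟨m, rfl⟩ := Ideal.mem_span_singleton'.mp hk
    rw [Ideal.mem_span_pair]
    refine ⟨(p : BurnsideCp p) * m, (m : BurnsideCp p) * q, ?_⟩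
    push_cast
    ring
  · intro k hk
    obtain ⟨m, rfl⟩ := Ideal.mem_span_singleton'.mp hk
    rw [Ideal.mem_span_pair]
    refine ⟨(((m * q : ℤ) ^ p / q : ℤ) : BurnsideCp p),
      ((((m * q : ℤ) ^ p - m * q) / p : ℤ) : BurnsideCp p), ?_⟩
    have hdvd : (q : ℤ) ∣ (m * q : ℤ) ^ p :=
      Dvd.dvd.trans ⟨m, (mul_comm _ _)⟩ (dvd_pow_self _ hp.ne_zero)
    have h1 : ((m * q : ℤ) ^ p / q : ℤ) * q = (m * q : ℤ) ^ p :=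
      Int.ediv_mul_cancel hdvd
    have h2 := fermat_div p hp (m * q)
    rw [NB]
    have e1 : ((((m * q : ℤ) ^ p / q : ℤ) : BurnsideCp p)) * (q : BurnsideCp p)
        = (((m * q : ℤ) ^ p : ℤ) : BurnsideCp p) := by
      rw [← Int.cast_natCast (R := BurnsideCp p), ← Int.cast_mul, h1]
    have e2 : (((((m * q : ℤ) ^ p - m * q) / p : ℤ) : BurnsideCp p)) * (p : BurnsideCp p)
        = ((((m * q : ℤ) ^ p - m * q) : ℤ) : BurnsideCp p) := by
      rw [← Int.cast_natCast (R := BurnsideCp p), ← Int.cast_mul, h2]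
    calc (((m * q : ℤ) ^ p / q : ℤ) : BurnsideCp p) * (q : BurnsideCp p)
          + ((((m * q : ℤ) ^ p - m * q) / p : ℤ) : BurnsideCp p) * (tE p - (p : BurnsideCp p))
        = (((m * q : ℤ) ^ p : ℤ) : BurnsideCp p)
          + ((((m * q : ℤ) ^ p - m * q) / p : ℤ) : BurnsideCp p) * tE p
          - ((((m * q : ℤ) ^ p - m * q) : ℤ) : BurnsideCp p) := by
          rw [mul_sub, e2, ← e1]; ring
      _ = ((m * q : ℤ) : BurnsideCp p)
          + ((((m * q : ℤ) ^ p - m * q) / p : ℤ) : BurnsideCp p) * tE p := by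
          push_cast; ring
end
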